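/- arXiv:1802.02452 — 6 statements merged into one kernel-verified Lean document; each statement's English description precedes it below -/
import Mathlib

section
/- For n ≥ 1, in the Fibonacci-sum set-graph G^F_{A^(n)}, every vertex has even degree, where loops contribute 2 to the degree of their vertex. -/
/-- A natural number is a Fibonacci number. -/
def IsFib (x : ℕ) : Prop := ∃ m, Nat.fib m = x

open Classical in
/-- Multiplicity of edges between vertices (subsets) `S` and `T` in the
Fibonacci-sum set-graph: pairs `(i,j)`, `i ∈ S`, `j ∈ T`, `i ≠ j`, `i+j` Fibonacci. -/
noncomputable def eps (S T : Finset ℕ) : ℕ :=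
  ((S ×ˢ T).filter (fun p => p.1 ≠ p.2 ∧ IsFib (p.1 + p.2))).card

open Classical in
/-- Loop number of a vertex `S`: unordered pairs `{i,j} ⊆ S`, `i ≠ j`, `i+j` Fibonacci. -/
noncomputable def loopNum (S : Finset ℕ) : ℕ :=
  ((S ×ˢ S).filter (fun p => p.1 < p.2 ∧ IsFib (p.1 + p.2))).card

/-- Vertex set of the set-graph of `{1,…,n}`: nonempty subsets. -/
def setVerts (n : ℕ) : Finset (Finset ℕ) :=
  (Finset.Icc 1 n).powerset.filter (fun S => S.Nonempty)

/-- Degree in the Fibonacci-sum set-graph: a loop (counted in `eps S S` as two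
ordered pairs) contributes 2 to the degree. -/
noncomputable def setDeg (n : ℕ) (S : Finset ℕ) : ℕ :=
  ∑ T ∈ setVerts n, eps S T

/-! Summing over the vertices `T` last, the degree of `S` is `∑_{i ∈ S} N_i * 2^(n-1)`, where `N_i`
counts the partners `j ≠ i` of `i` in `{1,…,n}` and `2^(n-1)` counts the vertices containing `j`.
A partner exists only if `n ≥ 2`, so every summand is even; the Fibonacci condition plays no role. -/

open Finset

section DoubleCounting

variable {α β : Type*}

theorem Finset.card_filter_mem_powerset [DecidableEq α] {U : Finset α} {a : α} (ha : a ∈ U) :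
    #{T ∈ U.powerset | a ∈ T} = 2 ^ (#U - 1) := by
  have hfilter : {T ∈ U.powerset | a ∈ T} = (U.erase a).powerset.image (insert a) := by
    conv_lhs => rw [← insert_erase ha, powerset_insert, filter_union]
    rw [filter_false_of_mem fun T hT => notMem_mono (mem_powerset.1 hT) (notMem_erase a U),
      filter_true_of_mem fun T hT => by
        obtain ⟨_, -, rfl⟩ := mem_image.1 hT; exact mem_insert_self _ _, empty_union]
  rw [hfilter, card_image_of_injOn, card_powerset, card_erase_of_mem ha]
  exact insert_erase_invOn.2.injOn.mono fun T hT => notMem_mono (mem_powerset.1 hT) (notMem_erase a U)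

theorem Finset.card_filter_product (p : α × β → Prop) [DecidablePred p] (S : Finset α)
    (T : Finset β) : #{x ∈ S ×ˢ T | p x} = ∑ i ∈ S, #{j ∈ T | p (i, j)} := by
  simp only [card_filter, sum_product]

theorem Finset.sum_card_filter_product_of_card_filter_mem_eq [DecidableEq β]
    (p : α × β → Prop) [DecidablePred p] (S : Finset α) {U : Finset β}
    {B : Finset (Finset β)} {m : ℕ} (hB : ∀ T ∈ B, T ⊆ U) (hm : ∀ j ∈ U, #{T ∈ B | j ∈ T} = m) :
    ∑ T ∈ B, #{x ∈ S ×ˢ T | p x} = ∑ i ∈ S, #{j ∈ U | p (i, j)} * m := by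
  calc ∑ T ∈ B, #{x ∈ S ×ˢ T | p x}
      = ∑ i ∈ S, ∑ T ∈ B, #({j ∈ U | p (i, j)} ∩ T) := by
        rw [sum_comm]
        refine sum_congr rfl fun T hT => ?_
        rw [card_filter_product]
        refine sum_congr rfl fun i _ => ?_
        rw [filter_inter, inter_eq_right.2 (hB T hT)]
    _ = ∑ i ∈ S, #{j ∈ U | p (i, j)} * m :=
        sum_congr rfl fun i _ => sum_card_inter fun j hj => hm j (mem_filter.1 hj).1

end DoubleCounting

open Classical in
theorem card_filter_mem_setVerts {n j : ℕ} (hj : j ∈ Icc 1 n) :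
    #{T ∈ setVerts n | j ∈ T} = 2 ^ (n - 1) := by
  have hfilter : {T ∈ setVerts n | j ∈ T} = {T ∈ (Icc 1 n).powerset | j ∈ T} := by
    rw [setVerts, filter_filter]
    exact filter_congr fun T _ => ⟨And.right, fun hjT => ⟨⟨j, hjT⟩, hjT⟩⟩
  rw [hfilter, card_filter_mem_powerset hj, Nat.card_Icc, Nat.add_sub_cancel]

open Classical in
theorem setDeg_eq_sum (n : ℕ) (S : Finset ℕ) :
    setDeg n S = ∑ i ∈ S, #{j ∈ Icc 1 n | i ≠ j ∧ IsFib (i + j)} * 2 ^ (n - 1) :=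
  sum_card_filter_product_of_card_filter_mem_eq (fun x => x.1 ≠ x.2 ∧ IsFib (x.1 + x.2)) S
    (fun _ hT => mem_powerset.1 (mem_filter.1 hT).1) fun _ hj => card_filter_mem_setVerts hj

theorem fibSumSetGraph_degree_even_general (n : ℕ) (S : Finset ℕ)
    (hS : S ∈ setVerts n) : Even (setDeg n S) := by
  classical
  rw [setDeg_eq_sum]
  refine even_sum _ fun i hi => ?_
  obtain hempty | ⟨j, hj⟩ := {j ∈ Icc 1 n | i ≠ j ∧ IsFib (i + j)}.eq_empty_or_nonempty
  · simp [hempty]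
  · have hiIcc := mem_Icc.1 (mem_powerset.1 (mem_filter.1 hS).1 hi)
    obtain ⟨hjIcc, hij, -⟩ := mem_filter.1 hj
    have hn : 2 ≤ n := by have := mem_Icc.1 hjIcc; omega
    exact (Nat.even_pow.2 ⟨even_two, by omega⟩).mul_left _

/-- For `n ≥ 1`, every vertex of the Fibonacci-sum set-graph has even degree. -/
theorem fibSumSetGraph_degree_even (n : ℕ) (hn : 1 ≤ n) (S : Finset ℕ)
    (hS : S ∈ setVerts n) : Even (setDeg n S) :=
  fibSumSetGraph_degree_even_general n S hS
end

section
/- For n ≥ 3, the Fibonacci-sum set-graph G^F_{A^(n)} has no pendant vertices, i.e., every vertex has degree at least 2. -/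
/-! Every `i ∈ S` has a partner `j ∈ [1, n]` with `i + j` Fibonacci, and `j` lies in the two
distinct vertices `{j}` and `[1, n]`, each of which is therefore joined to `S` by an edge. For
`i ≥ 3` the partner is `fib (k + 1) - i`, where `fib k ≤ i < fib (k + 1)`; it is smaller than `i`
because `fib (k + 1) < 2 * fib k` once `k ≥ 3`. -/

open Finset

theorem exists_pos_lt_isFib_add {i : ℕ} (hi : 3 ≤ i) : ∃ j, 0 < j ∧ j < i ∧ IsFib (i + j) := by
  set k := Nat.greatestFib i
  have hk : 4 ≤ k := Nat.le_greatestFib.2 hi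
  have hlow : Nat.fib k ≤ i := Nat.fib_greatestFib_le i
  have hup : i < Nat.fib (k + 1) := Nat.lt_fib_greatestFib_add_one i
  have hgap : Nat.fib (k + 1) < 2 * Nat.fib k := by
    have hstep : Nat.fib (k - 1) < Nat.fib (k - 1 + 1) := Nat.fib_lt_fib_succ (by omega)
    rw [Nat.sub_add_cancel (by omega)] at hstep
    rw [Nat.fib_add_one (by omega)]
    omega
  exact ⟨Nat.fib (k + 1) - i, by omega, by omega, k + 1, by omega⟩

theorem exists_isFib_add_mem_Icc {n i : ℕ} (hn : 2 ≤ n) (hi : i ∈ Icc 1 n) :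
    ∃ j ∈ Icc 1 n, j ≠ i ∧ IsFib (i + j) := by
  rw [mem_Icc] at hi
  obtain h | h | h : i = 1 ∨ i = 2 ∨ 3 ≤ i := by omega
  · exact ⟨2, by simp [hn], by omega, 4, by simp [h, Nat.fib]⟩
  · exact ⟨1, by simp; omega, by omega, 4, by simp [h, Nat.fib]⟩
  · obtain ⟨j, hj0, hji, hfib⟩ := exists_pos_lt_isFib_add h
    exact ⟨j, mem_Icc.2 ⟨hj0, by omega⟩, hji.ne, hfib⟩

theorem eps_pos {S T : Finset ℕ} {i j : ℕ} (hi : i ∈ S) (hj : j ∈ T) (hij : i ≠ j)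
    (hfib : IsFib (i + j)) : 0 < eps S T :=
  card_pos.2 ⟨(i, j), by simp [hi, hj, hij, hfib]⟩

theorem singleton_mem_setVerts {n j : ℕ} (hj : j ∈ Icc 1 n) : {j} ∈ setVerts n := by
  simp [setVerts, hj]

theorem Icc_mem_setVerts {n : ℕ} (hn : 1 ≤ n) : Icc 1 n ∈ setVerts n := by
  simp [setVerts, hn]

theorem Finset.two_le_sum_of_pos {α : Type*} {s : Finset α} {f : α → ℕ} {a b : α}
    (ha : a ∈ s) (hb : b ∈ s) (hab : a ≠ b) (hfa : 0 < f a) (hfb : 0 < f b) :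
    2 ≤ ∑ x ∈ s, f x := by
  classical
  calc 2 ≤ f a + f b := by omega
    _ = ∑ x ∈ {a, b}, f x := (sum_pair hab).symm
    _ ≤ ∑ x ∈ s, f x := sum_le_sum_of_subset (insert_subset ha (singleton_subset_iff.2 hb))

/-- For `n ≥ 3`, the Fibonacci-sum set-graph has no pendant vertices. -/
theorem fibSumSetGraph_no_pendant (n : ℕ) (hn : 3 ≤ n) (S : Finset ℕ)
    (hS : S ∈ setVerts n) : 2 ≤ setDeg n S := by
  obtain ⟨hsub, i, hiS⟩ := mem_filter.1 hS
  obtain ⟨j, hj, hji, hfib⟩ := exists_isFib_add_mem_Icc (by omega) (mem_powerset.1 hsub hiS)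
  have hne : ({j} : Finset ℕ) ≠ Icc 1 n := fun h => by
    have := congrArg card h
    rw [card_singleton, Nat.card_Icc] at this
    omega
  exact two_le_sum_of_pos (singleton_mem_setVerts hj) (Icc_mem_setVerts (by omega)) hne
    (eps_pos hiS (mem_singleton_self j) hji.symm hfib) (eps_pos hiS hj hji.symm hfib)
end

section
/- For n ≥ 2, the Fibonacci-sum set-graph G^F_{A^(n)} is connected: between any two nonempty subsets of {1,...,n} there is a path in the graph. -/
/-- Vertices of the (popped) Fibonacci-sum set-graph: nonempty subsets of `{1,…,n}`. -/
def Vtx (n : ℕ) := {S : Finset ℕ // S ⊆ Finset.Icc 1 n ∧ S.Nonempty}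

/-- The popped Fibonacci-sum set-graph: distinct nonempty subsets `S, T` of `{1,…,n}`
are adjacent iff there are `i ∈ S`, `j ∈ T`, `i ≠ j`, with `i + j` Fibonacci. -/
def poppedFibGraph (n : ℕ) : SimpleGraph (Vtx n) where
  Adj A B := A ≠ B ∧ ∃ i ∈ A.1, ∃ j ∈ B.1, i ≠ j ∧ IsFib (i + j)
  symm := ⟨by
    rintro A B ⟨hne, i, hi, j, hj, hij, hf⟩
    exact ⟨hne.symm, j, hj, i, hi, hij.symm, by rwa [Nat.add_comm]⟩⟩
  loopless := ⟨by rintro A ⟨hne, -⟩; exact hne rfl⟩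

/-! Every vertex containing `a ≥ 2` is adjacent to a singleton `{b}` with `b < a` (complete `a` to
the next Fibonacci number), so descending through singletons reaches `{1}`; a vertex containing `1`
reaches `{1}` through `{2}`, as `1 + 2 = 3`. -/

open Nat in
/-- With `fib k ≤ a < fib (k + 1)`, the witness `fib (k + 1) - a` is at most `fib (k - 1)`,
which is below `fib k ≤ a` once `k ≥ 3`. -/
theorem exists_pos_lt_isFib_add_s3 {a : ℕ} (ha : 2 ≤ a) : ∃ b, 0 < b ∧ b < a ∧ IsFib (a + b) := by
  have hk : 3 ≤ greatestFib a := le_greatestFib.2 (by simpa [fib] using ha)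
  obtain ⟨m, hm⟩ : ∃ m, greatestFib a = m + 1 := ⟨greatestFib a - 1, by omega⟩
  have hlow : fib (m + 1) ≤ a := hm ▸ fib_greatestFib_le a
  have hhigh : a < fib (m + 2) := by simpa [hm] using lt_fib_greatestFib_add_one a
  have hrec : fib (m + 2) = fib m + fib (m + 1) := fib_add_two
  have hstrict : fib m < fib (m + 1) := fib_lt_fib_succ (by omega)
  exact ⟨fib (m + 2) - a, by omega, by omega, m + 2, by omega⟩

namespace Vtx

def single {n a : ℕ} (ha : a ∈ Finset.Icc 1 n) : Vtx n :=
  ⟨{a}, Finset.singleton_subset_iff.2 ha, Finset.singleton_nonempty a⟩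

theorem adj_single {n i j : ℕ} {A : Vtx n} (hi : i ∈ A.1) (hj : j ∈ Finset.Icc 1 n)
    (hij : i ≠ j) (hfib : IsFib (i + j)) : (poppedFibGraph n).Adj A (single hj) := by
  refine ⟨?_, i, hi, j, Finset.mem_singleton_self j, hij, hfib⟩
  rintro rfl
  exact hij (Finset.mem_singleton.1 hi)

theorem reachable_single_one {n : ℕ} (hn : 2 ≤ n) (a : ℕ) (A : Vtx n) (ha : a ∈ A.1) :
    (poppedFibGraph n).Reachable A (single (a := 1) (Finset.mem_Icc.2 ⟨le_rfl, by omega⟩)) := by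
  induction a using Nat.strong_induction_on generalizing A with
  | _ a ih =>
    have haIcc := Finset.mem_Icc.1 (A.2.1 ha)
    obtain rfl | ha2 := haIcc.1.eq_or_lt
    · have h2 : 2 ∈ Finset.Icc 1 n := Finset.mem_Icc.2 ⟨by omega, by omega⟩
      have hfib3 : IsFib 3 := ⟨4, rfl⟩
      exact (adj_single ha h2 (by decide) hfib3).reachable.trans
        (adj_single (Finset.mem_singleton_self 2) _ (by decide) hfib3).reachable
    · obtain ⟨b, hb0, hba, hfib⟩ := exists_pos_lt_isFib_add_s3 ha2
      have hb : b ∈ Finset.Icc 1 n := Finset.mem_Icc.2 ⟨by omega, by omega⟩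
      exact (adj_single ha hb hba.ne' hfib).reachable.trans
        (ih b hba _ (Finset.mem_singleton_self b))

end Vtx

/-- For `n ≥ 2`, the Fibonacci-sum set-graph is connected. -/
theorem fibSumSetGraph_connected (n : ℕ) (hn : 2 ≤ n) :
    (poppedFibGraph n).Connected :=
  (SimpleGraph.connected_iff_exists_forall_reachable _).2
    ⟨_, fun A => (Vtx.reachable_single_one hn _ A A.2.2.choose_spec).symm⟩
end

section
/- For n ≥ 2 and every vertex S of the Fibonacci-sum set-graph with S ≠ {1,...,n}, the loop number of S is strictly less than the loop number of {1,...,n}; hence {1,...,n} is the unique vertex of maximum loop number. -/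
/-!
Every `k ∈ {1,…,n}` has a partner `j ≠ k` in `{1,…,n}` with `k + j` Fibonacci: `j = 2` for
`k = 1`, and `j = F - k` when `k ≥ 2`, where `F` is the least Fibonacci number above `k`:
`F < 2k` because the successor of a Fibonacci number `f ≥ 2` is less than `2f`. A proper subset misses some `k`,
hence the pair `{k, j}`, while every pair it contains is a pair of `{1,…,n}`.
-/

theorem Nat.exists_fib_mem_Ioo {k : ℕ} (hk : 2 ≤ k) : ∃ m, fib m ∈ Set.Ioo k (2 * k) := by
  have h3 : 3 ≤ greatestFib k := le_greatestFib.mpr (show fib 3 ≤ k from hk)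
  obtain ⟨m, hm⟩ : ∃ m, greatestFib k = m + 2 := ⟨greatestFib k - 2, by omega⟩
  have hle : fib (m + 2) ≤ k := hm ▸ fib_greatestFib_le k
  have hlt : k < fib (m + 3) := by simpa [hm] using lt_fib_greatestFib_add_one k
  have hstep : fib (m + 1) < fib (m + 2) := fib_lt_fib_succ (by omega)
  have hsum : fib (m + 3) = fib (m + 1) + fib (m + 2) := fib_add_two
  exact ⟨m + 3, hlt, by omega⟩

theorem exists_isFib_add_of_mem_Icc {n k : ℕ} (hn : 2 ≤ n) (hk : k ∈ Finset.Icc 1 n) :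
    ∃ j ∈ Finset.Icc 1 n, j ≠ k ∧ IsFib (k + j) := by
  rw [Finset.mem_Icc] at hk
  rcases Nat.lt_or_ge k 2 with hk1 | hk2
  · exact ⟨2, Finset.mem_Icc.mpr ⟨by omega, hn⟩, by omega, 4, by rw [show k = 1 by omega]; rfl⟩
  · obtain ⟨m, hkm, hm⟩ := Nat.exists_fib_mem_Ioo hk2
    exact ⟨Nat.fib m - k, Finset.mem_Icc.mpr ⟨by omega, by omega⟩, by omega, m, by omega⟩

theorem loopNum_lt_of_subset_of_notMem {S T : Finset ℕ} (hST : S ⊆ T) {i j : ℕ} (hi : i ∈ T)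
    (hiS : i ∉ S) (hj : j ∈ T) (hij : i ≠ j) (hfib : IsFib (i + j)) : loopNum S < loopNum T := by
  classical
  unfold loopNum
  refine Finset.card_lt_card <| (Finset.ssubset_iff_of_subset ?_).mpr ⟨(min i j, max i j), ?_, ?_⟩
  · exact Finset.filter_subset_filter _ (Finset.product_subset_product hST hST)
  · have hmin : min i j ∈ T := by rcases min_choice i j with h | h <;> rw [h] <;> assumption
    have hmax : max i j ∈ T := by rcases max_choice i j with h | h <;> rw [h] <;> assumption
    simp only [Finset.mem_filter, Finset.mem_product, min_add_max]
    exact ⟨⟨hmin, hmax⟩, min_lt_max.mpr hij, hfib⟩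
  · simp only [Finset.mem_filter, Finset.mem_product, not_and]
    rintro ⟨hmin, hmax⟩ - -
    rcases le_total i j with h | h
    · exact hiS (min_eq_left h ▸ hmin)
    · exact hiS (max_eq_left h ▸ hmax)

theorem loopNum_full_unique_max_general (n : ℕ) (hn : 2 ≤ n) (S : Finset ℕ)
    (hS : S ⊆ Finset.Icc 1 n) (hSn : S ≠ Finset.Icc 1 n) :
    loopNum S < loopNum (Finset.Icc 1 n) := by
  obtain ⟨k, hk, hkS⟩ := Finset.exists_of_ssubset (hS.ssubset_of_ne hSn)
  obtain ⟨j, hj, hjk, hfib⟩ := exists_isFib_add_of_mem_Icc hn hk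
  exact loopNum_lt_of_subset_of_notMem hS hk hkS hj hjk.symm hfib

/-- For `n ≥ 2`, every proper nonempty subset of `{1,…,n}` has strictly smaller
loop number than `{1,…,n}`; hence `{1,…,n}` is the unique vertex of maximum loop number. -/
theorem loopNum_full_unique_max (n : ℕ) (hn : 2 ≤ n) (S : Finset ℕ)
    (hS : S ⊆ Finset.Icc 1 n) (hne : S.Nonempty) (hSn : S ≠ Finset.Icc 1 n) :
    loopNum S < loopNum (Finset.Icc 1 n) :=
  loopNum_full_unique_max_general n hn S hS hSn
end

section
/- For n ≥ 2 and every k with 2 ≤ k ≤ n, the loop number of the vertex {1,2,...,k} in the Fibonacci-sum set-graph G^F_{A^(n)} is at least k − 1; in particular, for each m with 0 ≤ m ≤ n − 1 there exists a vertex whose loop number is at least m, and singletons have loop number 0. -/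
/-!
Every `i ≥ 2` has a partner `j < i` with `i + j` Fibonacci: if `F` is the least Fibonacci number
exceeding `i`, take `j = F - i`. Writing `F = F' + F''` with `F'' < F' ≤ i` for the two preceding
Fibonacci numbers (strict because `i ≥ 2`) gives `F < 2 i`. Sending `i ∈ {2, …, k}` to the pair
`{j, i}` is injective, which yields `k - 1` Fibonacci pairs inside `{1, …, k}`.
-/

open Finset

lemma Nat.fib_add_one_lt_two_mul_fib {g : ℕ} (hg : 3 ≤ g) :
    Nat.fib (g + 1) < 2 * Nat.fib g := by
  obtain ⟨h, rfl⟩ := Nat.exists_eq_add_of_le' hg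
  show Nat.fib (h + 4) < 2 * Nat.fib (h + 3)
  have hlt : Nat.fib (h + 2) < Nat.fib (h + 3) := Nat.fib_lt_fib_succ (by omega)
  have hrec : Nat.fib (h + 4) = Nat.fib (h + 2) + Nat.fib (h + 3) :=
    Nat.fib_add_two
  omega

lemma exists_lt_isFib_add {i : ℕ} (hi : 2 ≤ i) : ∃ j, 1 ≤ j ∧ j < i ∧ IsFib (j + i) := by
  set g := Nat.greatestFib i
  have hg : 3 ≤ g := Nat.le_greatestFib.mpr hi
  have hle : Nat.fib g ≤ i := Nat.fib_greatestFib_le i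
  have hlt : i < Nat.fib (g + 1) := Nat.lt_fib_greatestFib_add_one i
  have htwo := Nat.fib_add_one_lt_two_mul_fib hg
  exact ⟨Nat.fib (g + 1) - i, by omega, by omega, g + 1, by omega⟩

lemma card_le_loopNum {S T : Finset ℕ} (hT : T ⊆ S)
    (h : ∀ i ∈ T, ∃ j ∈ S, j < i ∧ IsFib (j + i)) : #T ≤ loopNum S := by
  choose! p hpS hlt hfib using h
  refine card_le_card_of_injOn (fun i => (p i, i)) (fun i hi => ?_)
    (fun a _ b _ hab => congrArg Prod.snd hab)
  simp only [coe_filter, Set.mem_ofPred_eq, mem_product]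
  exact ⟨⟨hpS i hi, hT hi⟩, hlt i hi, hfib i hi⟩

lemma sub_one_le_loopNum_Icc (k : ℕ) : k - 1 ≤ loopNum (Icc 1 k) := by
  have hcard : #(Icc 2 k) = k - 1 := by rw [Nat.card_Icc]; omega
  rw [← hcard]
  refine card_le_loopNum (Icc_subset_Icc_left one_le_two) fun i hi => ?_
  rw [mem_Icc] at hi
  obtain ⟨j, hj1, hji, hfib⟩ := exists_lt_isFib_add hi.1
  exact ⟨j, mem_Icc.mpr ⟨hj1, by omega⟩, hji, hfib⟩

lemma loopNum_singleton (j : ℕ) : loopNum {j} = 0 := by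
  simp [loopNum, filter_eq_empty_iff]

theorem loopNum_initial_segments (n : ℕ) (hn : 2 ≤ n) :
    (∀ k, 2 ≤ k → k ≤ n → k - 1 ≤ loopNum (Finset.Icc 1 k)) ∧
    (∀ m, m ≤ n - 1 → ∃ S : Finset ℕ, S ⊆ Finset.Icc 1 n ∧ S.Nonempty ∧
      m ≤ loopNum S) ∧
    (∀ j ∈ Finset.Icc 1 n, loopNum ({j} : Finset ℕ) = 0) := by
  refine ⟨fun k _ _ => sub_one_le_loopNum_Icc k, fun m hm => ?_, fun j _ => loopNum_singleton j⟩
  refine ⟨Icc 1 (m + 1), Icc_subset_Icc_right (by omega), nonempty_Icc.mpr (by omega), ?_⟩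
  simpa using sub_one_le_loopNum_Icc (m + 1)
end

section
/- For n ≥ 2, the Fibonacci-sum graph G^F_n is bipartite; equivalently, it contains no odd cycle. -/
/-- The Fibonacci-sum graph `G^F_n` on `{1,…,n}`:
`i ~ j` iff `i ≠ j` and `i + j` is a Fibonacci number. -/
def fibSumGraph (n : ℕ) : SimpleGraph ℕ where
  Adj i j := i ∈ Finset.Icc 1 n ∧ j ∈ Finset.Icc 1 n ∧ i ≠ j ∧ IsFib (i + j)
  symm := by
    refine ⟨?_⟩
    rintro i j ⟨h1, h2, h3, h4⟩
    exact ⟨h2, h1, h3.symm, by rwa [Nat.add_comm]⟩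
  loopless := by refine ⟨?_⟩; rintro i ⟨-, -, h, -⟩; exact h rfl

namespace SimpleGraph

variable {V : Type*} {G G' : SimpleGraph V}

theorem Colorable.two_of_neighbors_linked (v : V) (hG : G.Colorable 2)
    (hle : ∀ a b, G'.Adj a b → a ≠ v → b ≠ v → G.Adj a b)
    (hlink : ∀ u w, G'.Adj v u → G'.Adj v w → u = w ∨ ∃ x, G.Adj u x ∧ G.Adj x w) :
    G'.Colorable 2 := by
  classical
  obtain ⟨C⟩ := hG
  have hsame : ∀ u w, G'.Adj v u → G'.Adj v w → C u = C w := by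
    intro u w hu hw
    obtain rfl | ⟨x, hux, hxw⟩ := hlink u w hu hw
    · rfl
    · have := C.valid hux
      have := C.valid hxw
      omega
  obtain ⟨c, hc⟩ : ∃ c : Fin 2, ∀ u, G'.Adj v u → C u ≠ c := by
    by_cases h : ∃ u, G'.Adj v u
    · obtain ⟨u₀, hu₀⟩ := h
      refine ⟨C u₀ + 1, fun u hu => ?_⟩
      rw [hsame u u₀ hu hu₀]
      omega
    · exact ⟨0, fun u hu => (h ⟨u, hu⟩).elim⟩
  refine ⟨Coloring.mk (Function.update C v c) fun {a b} hab => ?_⟩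
  by_cases ha : a = v
  · subst ha
    rw [Function.update_self, Function.update_of_ne (G'.ne_of_adj hab).symm]
    exact (hc b hab).symm
  by_cases hb : b = v
  · subst hb
    rw [Function.update_self, Function.update_of_ne ha]
    exact hc a hab.symm
  rw [Function.update_of_ne ha, Function.update_of_ne hb]
  exact C.valid (hle a b hab ha hb)

end SimpleGraph

open Nat in
theorem eq_add_one_of_fib_lt_fib {v a b : ℕ} (hva : v < fib a) (hab : fib a < fib b)
    (hbv : fib b < 2 * v) : b = a + 1 := by
  have hlt : a < b := lt_of_not_ge fun h => (fib_mono h).not_gt hab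
  by_contra
  have : fib (a + 2) ≤ fib b := fib_mono (by omega)
  have : fib (a + 2) = fib a + fib (a + 1) := fib_add_two
  have : fib a ≤ fib (a + 1) := fib_le_fib_succ
  omega

open Nat in
theorem exists_fibSum_common_neighbor {u v w : ℕ} (hu : 1 ≤ u) (huw : u < w) (hwv : w < v)
    (hfu : IsFib (u + v)) (hfw : IsFib (w + v)) :
    ∃ x, 1 ≤ x ∧ x < v ∧ u ≠ x ∧ x ≠ w ∧ IsFib (u + x) ∧ IsFib (x + w) := by
  obtain ⟨a, ha⟩ := hfu
  obtain ⟨b, hb⟩ := hfw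
  obtain rfl : b = a + 1 := eq_add_one_of_fib_lt_fib (v := v) (by omega) (by omega) (by omega)
  obtain ⟨d, rfl⟩ : ∃ d, a = d + 2 := by
    match a, ha, hb with
    | 0, ha, _ => simp at ha; omega
    | 1, ha, hb => simp [fib_add_two] at ha hb; omega
    | d + 2, _, _ => exact ⟨d, rfl⟩
  rw [show d + 2 + 1 = d + 3 from rfl] at hb
  have h2 : fib (d + 2) = fib d + fib (d + 1) := fib_add_two
  have h3 : fib (d + 3) = fib (d + 1) + fib (d + 2) := fib_add_two
  have hd : fib d ≤ fib (d + 1) := fib_le_fib_succ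
  have hpos : 0 < fib (d + 1) := fib_pos.mpr d.succ_pos
  exact ⟨v - fib (d + 1), by omega, by omega, by omega, by omega, ⟨d, by omega⟩, ⟨d + 2, by omega⟩⟩

theorem fibSumGraph_adj_of_succ {n a b : ℕ} (h : (fibSumGraph (n + 1)).Adj a b)
    (ha : a ≠ n + 1) (hb : b ≠ n + 1) : (fibSumGraph n).Adj a b := by
  obtain ⟨ha', hb', hne, hfib⟩ := h
  simp only [Finset.mem_Icc] at ha' hb'
  exact ⟨Finset.mem_Icc.mpr ⟨ha'.1, by omega⟩, Finset.mem_Icc.mpr ⟨hb'.1, by omega⟩, hne, hfib⟩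

theorem fibSumGraph_succ_neighbors_linked (n : ℕ) {u w : ℕ}
    (hu : (fibSumGraph (n + 1)).Adj (n + 1) u) (hw : (fibSumGraph (n + 1)).Adj (n + 1) w) :
    u = w ∨ ∃ x, (fibSumGraph n).Adj u x ∧ (fibSumGraph n).Adj x w := by
  wlog huw : u < w generalizing u w
  · obtain h | h | h := lt_trichotomy u w
    · exact absurd h huw
    · exact .inl h
    · obtain h | ⟨x, hwx, hxu⟩ := this hw hu h
      · exact .inl h.symm
      · exact .inr ⟨x, hxu.symm, hwx.symm⟩
  obtain ⟨-, hu', hvu, hfu⟩ := hu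
  obtain ⟨-, hw', hvw, hfw⟩ := hw
  simp only [Finset.mem_Icc] at hu' hw'
  obtain ⟨x, hx1, hxv, hux, hxw, hfux, hfxw⟩ :=
    exists_fibSum_common_neighbor (v := n + 1) hu'.1 huw (by omega) (by rwa [add_comm])
      (by rwa [add_comm])
  refine .inr ⟨x, ⟨?_, ?_, hux, hfux⟩, ⟨?_, ?_, hxw, hfxw⟩⟩ <;> simp only [Finset.mem_Icc] <;> omega

theorem fibSumGraph_bipartite_general (n : ℕ) :
    (fibSumGraph n).Colorable 2 := by
  induction n with
  | zero => exact ⟨.mk (fun _ => 0) fun ⟨ha, _⟩ => by simp at ha⟩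
  | succ n ih =>
    exact ih.two_of_neighbors_linked (n + 1) (fun _ _ => fibSumGraph_adj_of_succ)
      (fun _ _ => fibSumGraph_succ_neighbors_linked n)

/-- For `n ≥ 2`, the Fibonacci-sum graph `G^F_n` is bipartite (2-colorable). -/
theorem fibSumGraph_bipartite (n : ℕ) (hn : 2 ≤ n) :
    (fibSumGraph n).Colorable 2 :=
  fibSumGraph_bipartite_general n
end
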